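/- Persistence of the noreturn tag at equal stack height: consider an enhanced multi-pushdown system M̂ with N stacks whose global states carry, for each stack j ∈ [N], a tag r_j ∈ {willreturn, noreturn} and whose stack letters carry a tag in {willreturn, noreturn}, and suppose every step of M̂, taken on active stack s with top letter tag a_r before the step (primed components denote values after the step, a'_r the tag of the letter written), satisfies: if the action is a call then (r_s = willreturn implies r'_s = willreturn) and a'_r = r_s; if the action is internal then r'_s = r_s and a'_r = a_r; if the action is a return then r_s = willreturn and r'_s = a_r (the tag of the popped letter); and r'_j = r_j for every j ≠ s. Then for every infinite run of M̂, every j ∈ [N] and every position t: if r^t_j = noreturn, then for every t' > t such that |w^{t'}_j| = |w^t_j|, one has r^{t'}_j = noreturn (here w^t_j denotes the content of stack j at position t). -/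
import Mathlib


attribute [local instance] Classical.propDecidable

/-- Actions modifying a stack with alphabet `Γ`:
`call b` pushes `b`, `ret b` pops the top letter (which must be `b`),
`internal b` replaces the top letter by `b`. -/
inductive MPSAction (Γ : Type*) : Type _
  | call : Γ → MPSAction Γ
  | ret : Γ → MPSAction Γ
  | internal : Γ → MPSAction Γ

/-- The kind of an action. -/
inductive AKind : Type
  | call : AKind
  | ret : AKind
  | internal : AKind
deriving DecidableEq

namespace MPSAction

def kind {Γ : Type*} : MPSAction Γ → AKind
  | .call _ => .call
  | .ret _ => .ret
  | .internal _ => .internal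

def letter {Γ : Type*} : MPSAction Γ → Γ
  | .call b => b
  | .ret b => b
  | .internal b => b

def mapLetter {Γ Γ' : Type*} (f : Γ → Γ') : MPSAction Γ → MPSAction Γ'
  | .call b => .call (f b)
  | .ret b => .ret (f b)
  | .internal b => .internal (f b)

end MPSAction

/-- A multi-pushdown system with `N` stacks, global states `G` and stack alphabet `Γ`:
for each stack `s`, a transition relation `Δ s ⊆ G × Γ × G × 𝔄(Γ)`. -/
structure MPS (G Γ : Type*) (N : ℕ) : Type _ where
  Δ : Fin N → Set (G × Γ × G × MPSAction Γ)

/-- A configuration: a global state together with the contents of the `N` stacks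
(a stack is a list whose head is the top). -/
abbrev MPSConfig (G Γ : Type*) (N : ℕ) := G × (Fin N → List Γ)

/-- One-step relation with respect to the `s`-th stack. -/
def MPS.Step {G Γ : Type*} {N : ℕ} (M : MPS G Γ N) (s : Fin N)
    (c c' : MPSConfig G Γ N) : Prop :=
  ∃ (a : Γ) (rest : List Γ) (act : MPSAction Γ),
    c.2 s = a :: rest ∧
    (c.1, a, c'.1, act) ∈ M.Δ s ∧
    (∀ j : Fin N, j ≠ s → c'.2 j = c.2 j) ∧
    (match act with
      | .ret b => b = a ∧ c'.2 s = rest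
      | .internal b => c'.2 s = b :: rest
      | .call b => c'.2 s = b :: a :: rest)

/-- The standard constraint that the bottom letter `bot` is never pushed, popped,
or replaced by another symbol. -/
def MPS.BotOK {G Γ : Type*} {N : ℕ} (M : MPS G Γ N) (bot : Γ) : Prop :=
  ∀ s : Fin N, ∀ x ∈ M.Δ s,
    (match x.2.2.2 with
      | MPSAction.call b => b ≠ bot
      | MPSAction.ret b => b ≠ bot
      | MPSAction.internal b => (x.2.1 = bot ↔ b = bot))

/-- An infinite sequence of configurations together with the sequence of active stacks. -/
structure MPSTrace (G Γ : Type*) (N : ℕ) : Type _ where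
  conf : ℕ → MPSConfig G Γ N
  stk : ℕ → Fin N

/-- `ρ` is an infinite run of `M`: at each step `t` the active stack is `ρ.stk t`. -/
def MPS.IsRun {G Γ : Type*} {N : ℕ} (M : MPS G Γ N) (ρ : MPSTrace G Γ N) : Prop :=
  ∀ t : ℕ, M.Step (ρ.stk t) (ρ.conf t) (ρ.conf (t + 1))

/-- An enhanced multi-pushdown system: the global states are pairs `(g, s)` and every
transition of `Δ s` starts in a global state whose second component is `s`, so the global
state determines the active stack of the next step. -/
def MPS.Enhanced {G Γ : Type*} {N : ℕ} (M : MPS (G × Fin N) Γ N) : Prop :=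
  ∀ s : Fin N, ∀ x ∈ M.Δ s, x.1.2 = s

namespace MPSTrace

variable {G Γ : Type*} {N : ℕ}

/-- Height of the `j`-th stack at position `t`. -/
def height (ρ : MPSTrace G Γ N) (j : Fin N) (t : ℕ) : ℕ := ((ρ.conf t).2 j).length

/-- The step at position `t` is a call (the active stack grows). -/
def IsCallStep (ρ : MPSTrace G Γ N) (t : ℕ) : Prop :=
  ρ.height (ρ.stk t) (t + 1) = ρ.height (ρ.stk t) t + 1

/-- The step at position `t` is internal (the active stack keeps its height). -/
def IsInternalStep (ρ : MPSTrace G Γ N) (t : ℕ) : Prop :=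
  ρ.height (ρ.stk t) (t + 1) = ρ.height (ρ.stk t) t

/-- The step at position `t` is a return (the active stack shrinks). -/
def IsReturnStep (ρ : MPSTrace G Γ N) (t : ℕ) : Prop :=
  ρ.height (ρ.stk t) (t + 1) + 1 = ρ.height (ρ.stk t) t

/-- `t'` is the abstract successor `Succ^{a,s}(t)`: defined only if `s` is active at `t`;
after a call it is the least later position where `s` is active at the same height,
after an internal action the least later position where `s` is active,
and it is undefined after a return. -/
def IsAbsSucc (ρ : MPSTrace G Γ N) (s : Fin N) (t t' : ℕ) : Prop :=
  ρ.stk t = s ∧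
  ((ρ.IsCallStep t ∧ t < t' ∧ ρ.stk t' = s ∧ ρ.height s t' = ρ.height s t ∧
      ∀ u, t < u → u < t' → ¬(ρ.stk u = s ∧ ρ.height s u = ρ.height s t)) ∨
   (ρ.IsInternalStep t ∧ t < t' ∧ ρ.stk t' = s ∧
      ∀ u, t < u → u < t' → ρ.stk u ≠ s))

/-- `t'` is the caller successor `Succ^{c,s}(t)`: the greatest position `t' < t`
where `s` is active with height one less than the height of `s` at `t`. -/
def IsCallerSucc (ρ : MPSTrace G Γ N) (s : Fin N) (t t' : ℕ) : Prop :=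
  t' < t ∧ ρ.stk t' = s ∧ ρ.height s t' + 1 = ρ.height s t ∧
  ∀ u, t' < u → u < t → ¬(ρ.stk u = s ∧ ρ.height s u + 1 = ρ.height s t)

/-- `k`-bounded runs: there are at most `k - 1` positions where a context switch occurs. -/
def KBounded (ρ : MPSTrace G Γ N) (k : ℕ) : Prop :=
  ∃ f : Fin (k - 1) → ℕ, ∀ t : ℕ, t ∉ Set.range f → ρ.stk t = ρ.stk (t + 1)

/-- `k`-phase-bounded runs: `ℕ` can be partitioned into `α ≤ k` classes such that within
each class all return actions are performed on a single stack. -/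
def KPhaseBounded (ρ : MPSTrace G Γ N) (k : ℕ) : Prop :=
  ∃ (α : ℕ) (c : ℕ → Fin α), α ≤ k ∧
    ∀ b : Fin α, ∃ s : Fin N, ∀ i : ℕ, c i = b → ρ.IsReturnStep i → ρ.stk i = s

/-- `≼`-bounded runs for a total ordering `le` of the stacks: whenever a return is
performed on a stack, every strictly smaller stack contains only bottom letters. -/
def OrderBounded (ρ : MPSTrace G Γ N) (isBot : Γ → Prop)
    (le : Fin N → Fin N → Prop) : Prop :=
  ∀ t : ℕ, ρ.IsReturnStep t → ∀ j : Fin N, le j (ρ.stk t) → j ≠ ρ.stk t →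
    ∀ a ∈ (ρ.conf t).2 j, isBot a

end MPSTrace
/-- Tags recording whether the current call will ever be returned. -/
inductive RTag : Type
  | willreturn : RTag
  | noreturn : RTag
deriving DecidableEq

/-- Tags recording whether a stack is ever active again. -/
inductive DTag : Type
  | alive : DTag
  | dead : DTag
deriving DecidableEq

/-- The hypothesis on transitions of a system whose global states carry a return tag
per stack (extracted by `rof`) and whose stack letters carry a return tag: calls push
the current tag and keep `willreturn`; internal actions keep both tags; returns are
only allowed with tag `willreturn` and restore the tag of the popped letter; tags of
inactive stacks are preserved. -/
def RTagCond {Gs Γ₀ : Type*} {N : ℕ} (M : MPS (Gs × Fin N) (Γ₀ × RTag) N)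
    (rof : Gs → Fin N → RTag) : Prop :=
  ∀ s : Fin N,
    ∀ x ∈ M.Δ s,
      (∀ j : Fin N, j ≠ s → rof x.2.2.1.1 j = rof x.1.1 j) ∧
      (match x.2.2.2 with
        | MPSAction.call b =>
            (rof x.1.1 s = RTag.willreturn → rof x.2.2.1.1 s = RTag.willreturn) ∧
            b.2 = rof x.1.1 s
        | MPSAction.internal b =>
            rof x.2.2.1.1 s = rof x.1.1 s ∧ b.2 = x.2.1.2
        | MPSAction.ret _ =>
            rof x.1.1 s = RTag.willreturn ∧ rof x.2.2.1.1 s = x.2.1.2)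

/-- Persistence of the `noreturn` tag at equal stack height: under
the return-tag conditions on every step, along any infinite run, if the tag of stack
`j` is `noreturn` at position `t`, then at every later position `t' > t` at which
stack `j` has the same height, its tag is again `noreturn`. -/
theorem noreturn_tag_persists {G₀ Γ₀ : Type*} [Fintype G₀] [Nonempty G₀] [Fintype Γ₀]
    {N : ℕ} (hN : 1 ≤ N)
    (M : MPS ((G₀ × (Fin N → RTag)) × Fin N) (Γ₀ × RTag) N) (hM : M.Enhanced)
    (hcond : RTagCond M (fun g => g.2))
    (ρ : MPSTrace ((G₀ × (Fin N → RTag)) × Fin N) (Γ₀ × RTag) N) (hρ : M.IsRun ρ)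
    (j : Fin N) (t t' : ℕ) (hr : (ρ.conf t).1.1.2 j = RTag.noreturn)
    (htt' : t < t') (hht : ρ.height j t' = ρ.height j t) :
    (ρ.conf t').1.1.2 j = RTag.noreturn := by
  suffices H : ∀ u : ℕ,
      (((ρ.conf (t+u)).2 j).length = ρ.height j t ∧
        (ρ.conf (t+u)).1.1.2 j = RTag.noreturn) ∨
      (∃ pre a suf, (ρ.conf (t+u)).2 j = pre ++ a :: suf ∧
        suf.length = ρ.height j t ∧ a.2 = RTag.noreturn) by
    obtain ⟨d, rfl⟩ : ∃ d, t' = t + d := ⟨t' - t, by omega⟩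
    rcases H d with ⟨_, htag⟩ | ⟨pre, a, suf, hw, hlen, _⟩
    · exact htag
    · exfalso
      have hht' : ρ.height j (t+d) = ((ρ.conf (t+d)).2 j).length := rfl
      rw [hw] at hht'
      simp only [List.length_append, List.length_cons, hlen] at hht'
      omega
  intro u
  induction u with
  | zero => exact Or.inl ⟨rfl, hr⟩
  | succ u ih =>
    obtain ⟨a, rest, act, hw, hΔ, hoth, hact⟩ := hρ (t+u)
    obtain ⟨htag_oth, hmatch⟩ := hcond _ _ hΔ
    dsimp only at htag_oth hmatch
    by_cases hs : ρ.stk (t+u) = j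
    · rw [hs] at hw hact hmatch
      have hc : t + (u+1) = (t+u) + 1 := rfl
      rw [hc]
      cases act with
      | call b =>
        obtain ⟨-, hb⟩ := hmatch
        rcases ih with ⟨hlen, htag⟩ | ⟨pre, a', suf, hdec, hslen, hatag⟩
        · refine Or.inr ⟨[], b, a :: rest, by simpa using hact, ?_, ?_⟩
          · rw [hw] at hlen; exact hlen
          · rw [hb]; exact htag
        · rw [hw] at hdec
          exact Or.inr ⟨b :: pre, a', suf, by rw [hact, hdec]; rfl, hslen, hatag⟩
      | internal b =>
        obtain ⟨htagkeep, hb⟩ := hmatch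
        rcases ih with ⟨hlen, htag⟩ | ⟨pre, a', suf, hdec, hslen, hatag⟩
        · refine Or.inl ⟨?_, by rw [htagkeep]; exact htag⟩
          rw [hw] at hlen; rw [hact]; simpa using hlen
        · rw [hw] at hdec
          cases pre with
          | nil =>
            simp only [List.nil_append, List.cons.injEq] at hdec
            refine Or.inr ⟨[], b, suf, by rw [hact, hdec.2]; rfl, hslen, ?_⟩
            rw [hb, hdec.1]; exact hatag
          | cons p0 ps =>
            simp only [List.cons_append, List.cons.injEq] at hdec
            exact Or.inr ⟨b :: ps, a', suf, by rw [hact, hdec.2]; rfl, hslen, hatag⟩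
      | ret b =>
        obtain ⟨hwr, htagret⟩ := hmatch
        rcases ih with ⟨hlen, htag⟩ | ⟨pre, a', suf, hdec, hslen, hatag⟩
        · exact absurd (htag ▸ hwr) (by simp)
        · rw [hw] at hdec
          cases pre with
          | nil =>
            simp only [List.nil_append, List.cons.injEq] at hdec
            refine Or.inl ⟨?_, ?_⟩
            · rw [hact.2, hdec.2]; exact hslen
            · rw [htagret, hdec.1]; exact hatag
          | cons p0 ps =>
            simp only [List.cons_append, List.cons.injEq] at hdec
            exact Or.inr ⟨ps, a', suf, by rw [hact.2, hdec.2], hslen, hatag⟩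
    · have hne : j ≠ ρ.stk (t+u) := fun h => hs h.symm
      have h1 : (ρ.conf ((t+u)+1)).2 j = (ρ.conf (t+u)).2 j := hoth j hne
      have h2 : (ρ.conf ((t+u)+1)).1.1.2 j = (ρ.conf (t+u)).1.1.2 j := htag_oth j hne
      have hc : t + (u+1) = (t+u) + 1 := rfl
      rw [hc, h1, h2]
      exact ih
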